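/- Fix γ ≥ 0, κ > 0 and suppose η > 0 is such that for every w ∈ W, x ∈ X and j ∈ {1,…,K}, Δ_w(x,j) ≤ γ implies g^w_{γ,κ}(x,j) ≥ η (for the logistic gate one may take η = 1/2). Then for every probability measure Q on W, the posterior margin-failure risk satisfies R_{mf,γ}(Q;D') ≤ η^{−1} (1 + e^{γ}) · VWR_γ(Q;D'). -/

import Mathlib

open MeasureTheory

/-- Option margin: `Δ_s(y) = s(y) - max_{k ≠ y} s(k)`. -/
noncomputable def optionMargin {K : ℕ} (s : Fin K → ℝ) (y : Fin K) : ℝ :=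
  s y - ⨆ k : {k : Fin K // k ≠ y}, s k.1

/-- Softmax probability `p_s(i) = exp(s i) / Σ_k exp(s k)`. -/
noncomputable def softmaxProb {K : ℕ} (s : Fin K → ℝ) (i : Fin K) : ℝ :=
  Real.exp (s i) / ∑ k : Fin K, Real.exp (s k)

/-- Margin gate `g_{γ,κ}(Δ) = σ((γ - Δ)/κ)` with the logistic sigmoid. -/
noncomputable def gate (γ κ Δ : ℝ) : ℝ := 1 / (1 + Real.exp (-((γ - Δ) / κ)))

/-- Posterior-averaged margin-aware error-flow matrix `M̄^Q_{D',γ}`: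
entry `(i,j)` is `E_{w∼Q} E_{x∼D'_j}[g^w_{γ,κ}(x,j) p_w(i|x)]` for `i ≠ j`, zero diagonal. -/
noncomputable def Mbar {X W : Type*} [MeasurableSpace X] [MeasurableSpace W] {K : ℕ}
    (D : Fin K → Measure X) (s : W → X → Fin K → ℝ) (γ κ : ℝ) (Q : Measure W) :
    Matrix (Fin K) (Fin K) ℝ := fun i j =>
  if i = j then 0
  else ∫ w, ∫ x, gate γ κ (optionMargin (s w x) j) * softmaxProb (s w x) i ∂(D j) ∂Q

/-- Vulnerable worst-option risk `VWR_γ(Q;D') = ‖M̄^Q_{D',γ}‖₁` (max column absolute sum). -/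
noncomputable def VWR {X W : Type*} [MeasurableSpace X] [MeasurableSpace W] {K : ℕ}
    (D : Fin K → Measure X) (s : W → X → Fin K → ℝ) (γ κ : ℝ) (Q : Measure W) : ℝ :=
  ⨆ j : Fin K, ∑ i : Fin K, |Mbar D s γ κ Q i j|

/-- Posterior margin-failure risk
`R_{mf,γ}(Q;D') = max_j E_{x∼D'_j}[Q({w : Δ_w(x,j) ≤ γ})]`. -/
noncomputable def Rmf {X W : Type*} [MeasurableSpace X] [MeasurableSpace W] {K : ℕ}
    (D : Fin K → Measure X) (s : W → X → Fin K → ℝ) (γ : ℝ) (Q : Measure W) : ℝ :=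
  ⨆ j : Fin K, ∫ x, (Q {w | optionMargin (s w x) j ≤ γ}).toReal ∂(D j)


/-! If the margin of the true class `j` fails, `s j ≤ γ + s k` for the runner-up `k`, so
`exp (s j) ≤ e^γ ∑_{i ≠ j} exp (s i)` and the softmax mass off `j` is at least `1 / (1 + e^γ)`;
the gate is at least `η` there, so `1 ≤ η⁻¹ (1 + e^γ) ∑_{i ≠ j} g p_i` on the failure set.
Markov's inequality on `Q ⊗ D'_j` and Fubini turn this into
`E_{D'_j} Q(failure) ≤ η⁻¹ (1 + e^γ) ∑_{i ≠ j} M̄_{ij}`, a column sum of `M̄`. -/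

open MeasureTheory Finset

theorem MeasureTheory.Measure.prod_real_apply_symm {α β : Type*} [MeasurableSpace α]
    [MeasurableSpace β] {μ : Measure α} {ν : Measure β} [IsFiniteMeasure μ] [SFinite ν]
    {s : Set (α × β)} (hs : MeasurableSet s) :
    (μ.prod ν).real s = ∫ y, μ.real ((fun x => (x, y)) ⁻¹' s) ∂ν := by
  rw [measureReal_def, Measure.prod_apply_symm hs, ← integral_toReal
    (measurable_measure_prodMk_right hs).aemeasurable (ae_of_all _ fun _ => measure_lt_top _ _)]
  rfl

section Softmax

variable {K : ℕ}

lemma softmaxProb_nonneg (s : Fin K → ℝ) (i : Fin K) : 0 ≤ softmaxProb s i := by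
  unfold softmaxProb
  positivity

lemma softmaxProb_le_one (s : Fin K → ℝ) (i : Fin K) : softmaxProb s i ≤ 1 := by
  unfold softmaxProb
  rw [div_le_one (sum_pos (fun k _ => Real.exp_pos _) ⟨i, mem_univ i⟩)]
  exact single_le_sum (fun k _ => (Real.exp_pos (s k)).le) (mem_univ i)

lemma exists_optionMargin_eq (hK : 2 ≤ K) (s : Fin K → ℝ) (j : Fin K) :
    ∃ k ≠ j, optionMargin s j = s j - s k := by
  have : Nontrivial (Fin K) := Fin.nontrivial_iff_two_le.mpr hK
  have : Nonempty {k : Fin K // k ≠ j} := nonempty_subtype.mpr (exists_ne j)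
  obtain ⟨k, hk⟩ := exists_eq_ciSup_of_finite (f := fun k : {k : Fin K // k ≠ j} => s k.1)
  exact ⟨k.1, k.2, by rw [optionMargin, ← hk]⟩

lemma one_le_mul_sum_softmaxProb_of_optionMargin_le (hK : 2 ≤ K) {s : Fin K → ℝ} {j : Fin K}
    {γ : ℝ} (hΔ : optionMargin s j ≤ γ) :
    1 ≤ (1 + Real.exp γ) * ∑ i ∈ univ.erase j, softmaxProb s i := by
  obtain ⟨k, hkj, hk⟩ := exists_optionMargin_eq hK s j
  set A := ∑ i ∈ univ.erase j, Real.exp (s i)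
  have hE : 0 < ∑ i, Real.exp (s i) := sum_pos (fun i _ => Real.exp_pos _) ⟨j, mem_univ j⟩
  have hAE : A + Real.exp (s j) = ∑ i, Real.exp (s i) := sum_erase_add _ _ (mem_univ j)
  have hjA : Real.exp (s j) ≤ Real.exp γ * A :=
    calc Real.exp (s j) ≤ Real.exp (γ + s k) := Real.exp_le_exp.mpr (by linarith)
      _ = Real.exp γ * Real.exp (s k) := Real.exp_add _ _
      _ ≤ Real.exp γ * A := by
        gcongr
        exact single_le_sum (f := fun i => Real.exp (s i)) (fun i _ => (Real.exp_pos _).le)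
          (mem_erase.mpr ⟨hkj, mem_univ k⟩)
  simp only [softmaxProb, ← sum_div]
  rw [mul_div_assoc', le_div_iff₀ hE, one_mul]
  linarith

end Softmax

lemma gate_nonneg (γ κ Δ : ℝ) : 0 ≤ gate γ κ Δ := by
  unfold gate
  positivity

lemma gate_le_one (γ κ Δ : ℝ) : gate γ κ Δ ≤ 1 := by
  unfold gate
  rw [div_le_one (by positivity)]
  linarith [Real.exp_pos (-((γ - Δ) / κ))]

lemma continuous_gate (γ κ : ℝ) : Continuous (gate γ κ) := by
  unfold gate
  exact continuous_const.div (by fun_prop) fun _ => by positivity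

section Measurability

variable {δ : Type*} [MeasurableSpace δ] {K : ℕ} {f : δ → Fin K → ℝ}

lemma measurable_optionMargin (hf : ∀ k, Measurable fun a => f a k) (j : Fin K) :
    Measurable fun a => optionMargin (f a) j :=
  (hf j).sub (Measurable.iSup fun k => hf k.1)

lemma measurable_softmaxProb (hf : ∀ k, Measurable fun a => f a k) (i : Fin K) :
    Measurable fun a => softmaxProb (f a) i :=
  (hf i).exp.div (Finset.measurable_sum _ fun k _ => (hf k).exp)

lemma integrable_gate_mul_softmaxProb {μ : Measure δ} [IsFiniteMeasure μ]
    (hf : ∀ k, Measurable fun a => f a k) (γ κ : ℝ) (i j : Fin K) :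
    Integrable (fun a => gate γ κ (optionMargin (f a) j) * softmaxProb (f a) i) μ := by
  refine Integrable.of_bound
    (((continuous_gate γ κ).measurable.comp (measurable_optionMargin hf j)).mul
      (measurable_softmaxProb hf i)).aestronglyMeasurable 1 (ae_of_all _ fun a => ?_)
  rw [Real.norm_of_nonneg (mul_nonneg (gate_nonneg ..) (softmaxProb_nonneg ..))]
  exact mul_le_one₀ (gate_le_one ..) (softmaxProb_nonneg ..) (softmaxProb_le_one ..)

end Measurability

section ErrorFlow

variable {X W : Type*} [MeasurableSpace X] [MeasurableSpace W] {K : ℕ}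
  (D : Fin K → Measure X) (s : W → X → Fin K → ℝ) (γ κ : ℝ) (Q : Measure W)

lemma Mbar_eq_integral_prod [IsFiniteMeasure Q] {i j : Fin K} [IsFiniteMeasure (D j)]
    (hs : ∀ k, Measurable fun p : W × X => s p.1 p.2 k) (hij : i ≠ j) :
    Mbar D s γ κ Q i j =
      ∫ p, gate γ κ (optionMargin (s p.1 p.2) j) * softmaxProb (s p.1 p.2) i ∂(Q.prod (D j)) := by
  rw [Mbar, if_neg hij, integral_prod _ (integrable_gate_mul_softmaxProb hs γ κ i j)]

lemma sum_erase_Mbar_le_VWR (j : Fin K) :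
    ∑ i ∈ univ.erase j, Mbar D s γ κ Q i j ≤ VWR D s γ κ Q :=
  calc ∑ i ∈ univ.erase j, Mbar D s γ κ Q i j
      ≤ ∑ i ∈ univ.erase j, |Mbar D s γ κ Q i j| := sum_le_sum fun _ _ => le_abs_self _
    _ ≤ ∑ i, |Mbar D s γ κ Q i j| :=
        sum_le_sum_of_subset_of_nonneg (erase_subset j univ) fun _ _ _ => abs_nonneg _
    _ ≤ VWR D s γ κ Q :=
        le_ciSup (f := fun j => ∑ i, |Mbar D s γ κ Q i j|) (Set.finite_range _).bddAbove j

end ErrorFlow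

lemma one_le_mul_sum_gate_mul_softmaxProb {K : ℕ} (hK : 2 ≤ K) {s : Fin K → ℝ} {j : Fin K}
    {γ κ η : ℝ} (hη : 0 < η) (hΔ : optionMargin s j ≤ γ)
    (hgate : η ≤ gate γ κ (optionMargin s j)) :
    1 ≤ η⁻¹ * (1 + Real.exp γ) *
      ∑ i ∈ univ.erase j, gate γ κ (optionMargin s j) * softmaxProb s i := by
  have hsum : η * ∑ i ∈ univ.erase j, softmaxProb s i
      ≤ ∑ i ∈ univ.erase j, gate γ κ (optionMargin s j) * softmaxProb s i := by
    rw [mul_sum]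
    exact sum_le_sum fun i _ => mul_le_mul_of_nonneg_right hgate (softmaxProb_nonneg s i)
  calc 1 ≤ (1 + Real.exp γ) * ∑ i ∈ univ.erase j, softmaxProb s i :=
        one_le_mul_sum_softmaxProb_of_optionMargin_le hK hΔ
    _ = η⁻¹ * (1 + Real.exp γ) * (η * ∑ i ∈ univ.erase j, softmaxProb s i) := by
        field_simp
    _ ≤ _ := by gcongr

theorem marginFailure_le_vulnerableMass_general {X W : Type*} [MeasurableSpace X] [MeasurableSpace W]
    {K : ℕ} (hK : 2 ≤ K)
    (D : Fin K → Measure X) (hD : ∀ j, IsProbabilityMeasure (D j))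
    (s : W → X → Fin K → ℝ)
    (hs : ∀ k : Fin K, Measurable fun p : W × X => s p.1 p.2 k)
    (γ κ η : ℝ) (hη : 0 < η)
    (hgate : ∀ (w : W) (x : X) (j : Fin K),
      optionMargin (s w x) j ≤ γ → η ≤ gate γ κ (optionMargin (s w x) j))
    (Q : Measure W) (hQ : IsProbabilityMeasure Q) :
    Rmf D s γ Q ≤ η⁻¹ * (1 + Real.exp γ) * VWR D s γ κ Q := by
  have : Nonempty (Fin K) := ⟨⟨0, by omega⟩⟩
  refine ciSup_le fun j => ?_
  set C := η⁻¹ * (1 + Real.exp γ)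
  set F : W × X → ℝ := fun p =>
    C * ∑ i ∈ univ.erase j, gate γ κ (optionMargin (s p.1 p.2) j) * softmaxProb (s p.1 p.2) i
  have hF : Integrable F (Q.prod (D j)) :=
    (integrable_finsetSum _ fun i _ => integrable_gate_mul_softmaxProb hs γ κ i j).const_mul C
  have hF0 : 0 ≤ F := fun p => mul_nonneg (by positivity) (sum_nonneg fun i _ =>
    mul_nonneg (gate_nonneg ..) (softmaxProb_nonneg ..))
  calc ∫ x, (Q {w | optionMargin (s w x) j ≤ γ}).toReal ∂(D j)
      = (Q.prod (D j)).real {p | optionMargin (s p.1 p.2) j ≤ γ} :=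
        (Measure.prod_real_apply_symm (measurable_optionMargin hs j measurableSet_Iic)).symm
    _ ≤ (Q.prod (D j)).real {p | 1 ≤ F p} :=
        measureReal_mono fun p hp => one_le_mul_sum_gate_mul_softmaxProb hK hη hp (hgate _ _ j hp)
    _ ≤ ∫ p, F p ∂(Q.prod (D j)) := by
        simpa using mul_meas_ge_le_integral_of_nonneg (ae_of_all _ hF0) hF 1
    _ = C * ∑ i ∈ univ.erase j, Mbar D s γ κ Q i j := by
        rw [integral_const_mul, integral_finsetSum _ fun i _ =>
          integrable_gate_mul_softmaxProb hs γ κ i j]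
        exact congrArg _ (sum_congr rfl fun i hi =>
          (Mbar_eq_integral_prod D s γ κ Q hs (ne_of_mem_erase hi)).symm)
    _ ≤ C * VWR D s γ κ Q := by
        gcongr
        exact sum_erase_Mbar_le_VWR D s γ κ Q j

/-- Margin failure is controlled by vulnerable mass:
`R_{mf,γ}(Q;D') ≤ η⁻¹ (1+e^γ) VWR_γ(Q;D')` when the gate is at least `η` on failure. -/
theorem marginFailure_le_vulnerableMass {X W : Type*} [MeasurableSpace X] [MeasurableSpace W]
    {K : ℕ} (hK : 2 ≤ K)
    (D : Fin K → Measure X) (hD : ∀ j, IsProbabilityMeasure (D j))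
    (s : W → X → Fin K → ℝ)
    (hs : ∀ k : Fin K, Measurable fun p : W × X => s p.1 p.2 k)
    (γ κ η : ℝ) (hγ : 0 ≤ γ) (hκ : 0 < κ) (hη : 0 < η)
    (hgate : ∀ (w : W) (x : X) (j : Fin K),
      optionMargin (s w x) j ≤ γ → η ≤ gate γ κ (optionMargin (s w x) j))
    (Q : Measure W) (hQ : IsProbabilityMeasure Q) :
    Rmf D s γ Q ≤ η⁻¹ * (1 + Real.exp γ) * VWR D s γ κ Q :=
  marginFailure_le_vulnerableMass_general hK D hD s hs γ κ η hη hgate Q hQ
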